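/- Let F be a strategyproof 2-facility mechanism on the line with approximation ratio at most ρ. For every (i|j,k)-well-separated 3-agent instance x (i.e., x_i < x_j < x_k and ρ(x_k − x_j) < x_j − x_i), the rightmost facility satisfies F_2(x) ∈ [x_j, x_k]. -/

import Mathlib

noncomputable section

/-- Cost of an agent at location `a` under a pair of facilities. -/
def fcost (a : ℝ) (y : ℝ × ℝ) : ℝ := min |a - y.1| |a - y.2|

/-- Social cost: sum of the agents' distances to their nearest facility. -/
def scost {n : ℕ} (x : Fin n → ℝ) (y : ℝ × ℝ) : ℝ := ∑ i, fcost (x i) y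

/-- Optimal social cost over all placements of two facilities. -/
def optCost {n : ℕ} (x : Fin n → ℝ) : ℝ := ⨅ y : ℝ × ℝ, scost x y

/-- The mechanism outputs its facilities in increasing order. -/
def Ordered {n : ℕ} (F : (Fin n → ℝ) → ℝ × ℝ) : Prop := ∀ x, (F x).1 ≤ (F x).2

/-- No agent can strictly decrease her cost by misreporting her location. -/
def Strategyproof {n : ℕ} (F : (Fin n → ℝ) → ℝ × ℝ) : Prop :=
  ∀ (x : Fin n → ℝ) (i : Fin n) (y : ℝ),
    fcost (x i) (F x) ≤ fcost (x i) (F (Function.update x i y))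

/-- `F` has approximation ratio (at most) `ρ` for the social cost. -/
def ApproxRatio {n : ℕ} (F : (Fin n → ℝ) → ℝ × ℝ) (ρ : ℝ) : Prop :=
  ∀ x, scost x (F x) ≤ ρ * optCost x

/-- An `(i|j,k)`-well-separated 3-agent instance. -/
def WellSep (ρ : ℝ) (x : Fin 3 → ℝ) (i j k : Fin 3) : Prop :=
  x i < x j ∧ x j < x k ∧ ρ * (x k - x j) < x j - x i

/-!
A misreport that moves one agent onto another yields an instance served at zero cost,
so strategyproofness caps every agent's cost by her distance to any other agent.
Applied to agent `k`, this forces the right facility to be at least `x j`. Applied to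
agent `j`, if the right facility were beyond `x k`, agent `j` would be served by the left
facility together with agent `i`, at total cost at least `x j - x i`, which exceeds the
guaranteed `ρ (x k - x j)`.
-/

section fcost

variable {a b : ℝ} {y : ℝ × ℝ}

lemma fcost_nonneg (a : ℝ) (y : ℝ × ℝ) : 0 ≤ fcost a y :=
  le_min (abs_nonneg _) (abs_nonneg _)

lemma fcost_le_left (a : ℝ) (y : ℝ × ℝ) : fcost a y ≤ |a - y.1| := min_le_left _ _

lemma fcost_le_right (a : ℝ) (y : ℝ × ℝ) : fcost a y ≤ |a - y.2| := min_le_right _ _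

lemma fcost_eq_zero_of_eq_or_eq (h : a = y.1 ∨ a = y.2) : fcost a y = 0 := by
  refine le_antisymm ?_ (fcost_nonneg a y)
  rcases h with rfl | rfl
  · simpa using fcost_le_left y.1 y
  · simpa using fcost_le_right y.2 y

lemma fcost_le_abs_sub_add (a b : ℝ) (y : ℝ × ℝ) : fcost a y ≤ |a - b| + fcost b y :=
  calc fcost a y ≤ min (|a - b| + |b - y.1|) (|a - b| + |b - y.2|) :=
        min_le_min (abs_sub_le a b _) (abs_sub_le a b _)
    _ = |a - b| + fcost b y := min_add_add_left _ _ _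

lemma sub_le_fcost (a : ℝ) (hy : y.1 ≤ y.2) : a - y.2 ≤ fcost a y :=
  le_min (by linarith [le_abs_self (a - y.1)]) (le_abs_self _)

lemma fcost_eq_left_of_lt (h : fcost a y < |a - y.2|) : fcost a y = |a - y.1| :=
  min_eq_left ((min_lt_iff.mp h).resolve_right (lt_irrefl _)).le

lemma sub_le_fcost_add_abs (hb : b ≤ y.2) : b - a ≤ fcost a y + |b - y.1| := by
  rw [fcost, ← min_add_add_right]
  refine le_min ?_ ?_
  · linarith [le_abs_self (b - a), abs_sub_le b y.1 a, abs_sub_comm y.1 a]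
  · linarith [neg_abs_le (a - y.2), abs_nonneg (b - y.1)]

lemma sub_le_fcost_add_fcost (hb : b ≤ y.2) (h : fcost b y < |b - y.2|) :
    b - a ≤ fcost a y + fcost b y :=
  fcost_eq_left_of_lt h ▸ sub_le_fcost_add_abs hb

end fcost

section scost

variable {n : ℕ}

lemma fcost_le_scost (x : Fin n → ℝ) (t : Fin n) (y : ℝ × ℝ) :
    fcost (x t) y ≤ scost x y :=
  Finset.single_le_sum (fun s _ => fcost_nonneg (x s) y) (Finset.mem_univ t)

lemma scost_nonneg (x : Fin n → ℝ) (y : ℝ × ℝ) : 0 ≤ scost x y :=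
  Finset.sum_nonneg fun _ _ => fcost_nonneg _ _

lemma optCost_le_scost (x : Fin n → ℝ) (y : ℝ × ℝ) : optCost x ≤ scost x y :=
  ciInf_le ⟨0, by rintro _ ⟨y', rfl⟩; exact scost_nonneg x y'⟩ y

lemma optCost_eq_zero_of_forall {x : Fin n → ℝ} (y : ℝ × ℝ)
    (h : ∀ t, x t = y.1 ∨ x t = y.2) : optCost x = 0 :=
  le_antisymm
    ((optCost_le_scost x y).trans_eq
      (Finset.sum_eq_zero fun t _ => fcost_eq_zero_of_eq_or_eq (h t)))
    (le_ciInf fun y' => scost_nonneg x y')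

end scost

lemma Fin.exists_forall_eq_or_eq_or_eq {j k : Fin 3} (hjk : j ≠ k) :
    ∃ i, ∀ t, t = i ∨ t = j ∨ t = k := by
  revert j k; decide

lemma scost_fin_three (x : Fin 3 → ℝ) (y : ℝ × ℝ) {i j k : Fin 3}
    (hij : i ≠ j) (hik : i ≠ k) (hjk : j ≠ k) :
    scost x y = fcost (x i) y + fcost (x j) y + fcost (x k) y := by
  fin_cases i <;> fin_cases j <;> fin_cases k <;>
    simp_all [scost, Fin.sum_univ_three] <;> ring

lemma optCost_le_abs_sub (x : Fin 3 → ℝ) {i j k : Fin 3}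
    (hij : i ≠ j) (hik : i ≠ k) (hjk : j ≠ k) : optCost x ≤ |x k - x j| := by
  have hi : fcost (x i) (x i, x j) = 0 := fcost_eq_zero_of_eq_or_eq (Or.inl rfl)
  have hj : fcost (x j) (x i, x j) = 0 := fcost_eq_zero_of_eq_or_eq (Or.inr rfl)
  calc optCost x ≤ scost x (x i, x j) := optCost_le_scost x _
    _ = fcost (x k) (x i, x j) := by
      rw [scost_fin_three x _ hij hik hjk, hi, hj, zero_add, zero_add]
    _ ≤ |x k - x j| := fcost_le_right _ _

lemma Strategyproof.fcost_le_abs_sub {F : (Fin 3 → ℝ) → ℝ × ℝ} {ρ : ℝ}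
    (hsp : Strategyproof F) (happ : ApproxRatio F ρ) (x : Fin 3 → ℝ) {j k : Fin 3}
    (hjk : j ≠ k) : fcost (x j) (F x) ≤ |x j - x k| := by
  set x' := Function.update x j (x k)
  have hx'k : x' k = x k := Function.update_of_ne hjk.symm _ _
  obtain ⟨i, hcover⟩ := Fin.exists_forall_eq_or_eq_or_eq hjk
  have hopt : optCost x' = 0 := optCost_eq_zero_of_forall (x' i, x k) fun t => by
    rcases hcover t with rfl | rfl | rfl
    · exact Or.inl rfl
    · exact Or.inr (Function.update_self _ _ _)
    · exact Or.inr hx'k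
  have hk : fcost (x k) (F x') ≤ 0 := by
    simpa [hopt, hx'k] using (fcost_le_scost x' k (F x')).trans (happ x')
  calc fcost (x j) (F x) ≤ fcost (x j) (F x') := hsp x j (x k)
    _ ≤ |x j - x k| + fcost (x k) (F x') := fcost_le_abs_sub_add _ _ _
    _ ≤ |x j - x k| := by linarith

theorem rightmost_facility_mem_Icc_general (F : (Fin 3 → ℝ) → ℝ × ℝ) (ρ : ℝ) (hρ : 1 ≤ ρ)
    (hord : Ordered F) (hsp : Strategyproof F) (happ : ApproxRatio F ρ)
    (x : Fin 3 → ℝ) (i j k : Fin 3)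
    (hws : WellSep ρ x i j k) :
    (F x).2 ∈ Set.Icc (x j) (x k) := by
  obtain ⟨hij, hjk, hsep⟩ := hws
  have hij' : i ≠ j := ne_of_apply_ne x hij.ne
  have hik' : i ≠ k := ne_of_apply_ne x (hij.trans hjk).ne
  have hjk' : j ≠ k := ne_of_apply_ne x hjk.ne
  have hj := hsp.fcost_le_abs_sub happ x hjk'
  rw [abs_of_neg (sub_neg.2 hjk), neg_sub] at hj
  constructor
  · have hk := hsp.fcost_le_abs_sub happ x hjk'.symm
    rw [abs_of_pos (sub_pos.2 hjk)] at hk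
    linarith [sub_le_fcost (x k) (hord x)]
  · by_contra! hq
    have hb : fcost (x j) (F x) < |x j - (F x).2| := by
      rw [abs_sub_comm]; linarith [le_abs_self ((F x).2 - x j)]
    have hopt := optCost_le_abs_sub x hij' hik' hjk'
    rw [abs_of_pos (sub_pos.2 hjk)] at hopt
    refine lt_irrefl (x j - x i) ?_
    calc x j - x i ≤ fcost (x i) (F x) + fcost (x j) (F x) :=
          sub_le_fcost_add_fcost (by linarith) hb
      _ ≤ scost x (F x) := by
          rw [scost_fin_three x (F x) hij' hik' hjk']; linarith [fcost_nonneg (x k) (F x)]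
      _ ≤ ρ * optCost x := happ x
      _ ≤ ρ * (x k - x j) := mul_le_mul_of_nonneg_left hopt (by linarith)
      _ < x j - x i := hsep

/-- For every `(i|j,k)`-well-separated 3-agent instance, the rightmost
facility lies in `[x_j, x_k]`. -/
theorem rightmost_facility_mem_Icc (F : (Fin 3 → ℝ) → ℝ × ℝ) (ρ : ℝ) (hρ : 1 ≤ ρ)
    (hord : Ordered F) (hsp : Strategyproof F) (happ : ApproxRatio F ρ)
    (x : Fin 3 → ℝ) (i j k : Fin 3)
    (hij : i ≠ j) (hik : i ≠ k) (hjk : j ≠ k)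
    (hws : WellSep ρ x i j k) :
    (F x).2 ∈ Set.Icc (x j) (x k) :=
  rightmost_facility_mem_Icc_general F ρ hρ hord hsp happ x i j k hws
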